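/- For every n ≥ 0, the singular word w_n is not a factor of w_{n+1}. -/

import Mathlib

/-!
The first letter of `w n` differs from the last letter of `s n` while the two words have the same
length, so they contain different numbers of `b`s. The first letters of `w n` and `w (n + 1)` also
differ, so an occurrence of `w n` in `w (n + 1)` lies in `s (n + 1)` without its last letter, a
prefix of `s n ^ (d (n + 1) + 1)`. But a factor of `t ^ k` as long as `t` is a conjugate of `t`,
which has the same letter counts as `t`.
-/

/-- Letters: `a` is `false`, `b` is `true`. -/
abbrev Word := List Bool

/-- `wpow w k` is the `k`-fold concatenation `w^k`. -/
def wpow (w : Word) (k : ℕ) : Word := (List.replicate k w).flatten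

lemma wpow_succ (w : Word) (k : ℕ) : wpow w (k + 1) = w ++ wpow w k := by
  simp [wpow, List.replicate_succ]

lemma wpow_succ' (w : Word) (k : ℕ) : wpow w (k + 1) = wpow w k ++ w := by
  simp [wpow, List.replicate_succ']

lemma isRotated_of_infix_wpow {t u : Word} {k : ℕ} (hu : u <:+: wpow t (k + 1))
    (hlen : u.length = t.length) : u ~r t := by
  induction k with
  | zero =>
    have ht : wpow t (0 + 1) = t := by simp [wpow]
    rw [hu.eq_of_length (by rwa [ht]), ht]
  | succ k ih =>
    obtain ⟨x, y, h⟩ := hu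
    rw [wpow_succ] at h
    by_cases hx : t.length ≤ x.length
    · obtain ⟨x', rfl⟩ : t <+: x :=
        List.prefix_of_prefix_length_le ⟨_, h.symm⟩ ⟨u ++ y, by simp⟩ hx
      exact ih ⟨x', y, by simpa using h⟩
    · have hwin := congrArg (fun l => (l.take (x.length + t.length)).drop x.length) h
      rw [wpow_succ] at hwin
      have hu : u = t.drop x.length ++ t.take x.length := by
        simpa [List.take_append, List.drop_append, hlen, le_of_not_ge hx,
          List.take_of_length_le] using hwin
      rw [hu]
      exact List.isRotated_append.trans (by rw [List.take_append_drop])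

lemma not_perm_cons_append_singleton {α : Type*} [DecidableEq α] {a b : α} (hab : a ≠ b)
    (l : List α) : ¬ (a :: l).Perm (l ++ [b]) := by
  intro h
  simpa [List.count_cons, hab, hab.symm] using h.count_eq a

section StandardSequence

variable {d : ℤ → ℕ} {s : ℤ → Word}

lemma standard_eq_append_last (hs1 : s (-1) = [true]) (hs0 : s 0 = [false])
    (hs : ∀ n : ℤ, 1 ≤ n → s n = wpow (s (n - 1)) (d n) ++ s (n - 2)) (n : ℤ) (hn : -1 ≤ n) :
    ∃ v, s n = v ++ [decide (Odd n)] := by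
  suffices h : ∀ n : ℤ, 0 ≤ n →
      (∃ v, s n = v ++ [decide (Odd n)]) ∧ ∃ v, s (n - 1) = v ++ [decide (Odd (n - 1))] by
    rcases hn.eq_or_lt with rfl | hn
    · exact (h 0 le_rfl).2
    · exact (h n (by omega)).1
  intro n hn
  induction n, hn using Int.leInduction with
  | base => exact ⟨⟨[], by simp [hs0]⟩, ⟨[], by simp [hs1]⟩⟩
  | succ n hn ih =>
    obtain ⟨ih, v, hv⟩ := ih
    refine ⟨⟨wpow (s n) (d (n + 1)) ++ v, ?_⟩, by simpa using ih⟩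
    rw [hs (n + 1) (by omega), show n + 1 - 2 = n - 1 by ring, hv]
    simp [odd_sub_one, odd_add_one]

lemma standard_sub_one_prefix (hd : ∀ n : ℤ, 1 ≤ n → 1 ≤ d n)
    (hs : ∀ n : ℤ, 1 ≤ n → s n = wpow (s (n - 1)) (d n) ++ s (n - 2)) (n : ℤ) (hn : 1 ≤ n) :
    s (n - 1) <+: s n := by
  obtain ⟨k, hk⟩ := Nat.exists_eq_add_of_le' (hd n hn)
  rw [hs n hn, hk, wpow_succ, List.append_assoc]
  exact List.prefix_append _ _

lemma standard_succ_dropLast_prefix_wpow (hd : ∀ n : ℤ, 1 ≤ n → 1 ≤ d n)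
    (hs1 : s (-1) = [true]) (hs0 : s 0 = [false])
    (hs : ∀ n : ℤ, 1 ≤ n → s n = wpow (s (n - 1)) (d n) ++ s (n - 2)) (n : ℤ) (hn : 0 ≤ n) :
    (s (n + 1)).dropLast <+: wpow (s n) (d (n + 1) + 1) := by
  obtain ⟨v, hv⟩ := standard_eq_append_last hs1 hs0 hs (n - 1) (by omega)
  have hv_prefix : v <+: s n := by
    rcases hn.eq_or_lt with rfl | hn
    · simp_all
    · exact (List.prefix_append v _).trans (hv ▸ standard_sub_one_prefix hd hs n (by omega))
  rw [hs (n + 1) (by omega), show n + 1 - 1 = n by ring, show n + 1 - 2 = n - 1 by ring, hv,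
    ← List.append_assoc, List.dropLast_concat, wpow_succ']
  exact (List.prefix_append_right_inj _).mpr hv_prefix

end StandardSequence

lemma singular_eq_cons {s w : ℤ → Word}
    (hw : ∀ n : ℤ, 0 ≤ n → w n = (if Odd n then [false] else [true]) ++ (s n).dropLast)
    (n : ℤ) (hn : 0 ≤ n) : w n = (!decide (Odd n)) :: (s n).dropLast := by
  rw [hw n hn]
  split_ifs <;> simp [*]

theorem singular_word_not_factor_general (d : ℤ → ℕ) (s : ℤ → Word)
    (hd : ∀ n : ℤ, 1 ≤ n → 1 ≤ d n)
    (hs1 : s (-1) = [true]) (hs0 : s 0 = [false])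
    (hs : ∀ n : ℤ, 1 ≤ n → s n = wpow (s (n - 1)) (d n) ++ s (n - 2))
    (w : ℤ → Word)
    (hw : ∀ n : ℤ, 0 ≤ n → w n = (if Odd n then [false] else [true]) ++ (s n).dropLast) :
    ∀ n : ℤ, 0 ≤ n → ¬ (w n <:+: w (n + 1)) := by
  intro n hn hfactor
  rw [singular_eq_cons hw n hn, singular_eq_cons hw (n + 1) (by omega), List.infix_cons_iff,
    List.cons_prefix_cons] at hfactor
  have hfactor_pow : (!decide (Odd n)) :: (s n).dropLast <:+: wpow (s n) (d (n + 1) + 1) := by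
    rcases hfactor with ⟨hparity, -⟩ | hfactor
    · simp [odd_add_one, ← Int.not_even_iff_odd] at hparity
    · exact hfactor.trans (standard_succ_dropLast_prefix_wpow hd hs1 hs0 hs n hn).isInfix
  obtain ⟨v, hv⟩ := standard_eq_append_last hs1 hs0 hs n (by omega)
  have hrot := isRotated_of_infix_wpow hfactor_pow (by simp [hv])
  rw [hv, List.dropLast_concat] at hrot
  exact not_perm_cons_append_singleton (by simp) v hrot.perm

/-- For every `n ≥ 0`, the singular word `wₙ` is not a factor of `wₙ₊₁`. -/
theorem singular_word_not_factor (d : ℤ → ℕ) (s : ℤ → Word)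
    (hd : ∀ n : ℤ, 1 ≤ n → 1 ≤ d n)
    (hs1 : s (-1) = [true]) (hs0 : s 0 = [false])
    (hs : ∀ n : ℤ, 1 ≤ n → s n = wpow (s (n - 1)) (d n) ++ s (n - 2))
    (w : ℤ → Word)
    (hw : ∀ n : ℤ, 0 ≤ n → w n = (if Odd n then [false] else [true]) ++ (s n).dropLast)
    (hwm1 : w (-1) = [false]) (hwm2 : w (-2) = []) :
    ∀ n : ℤ, 0 ≤ n → ¬ (w n <:+: w (n + 1)) :=
  singular_word_not_factor_general d s hd hs1 hs0 hs w hw
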